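/- arXiv:1211.4747 — 5 statements merged into one kernel-verified Lean document; each statement's English description precedes it below -/
import Mathlib

section
/- An integer n belongs to PF(S) if and only if for any fixed nonzero s in S, the element t^{n+s} is a nonzero element of the socle of K[S]/(t^s); concretely: n ∉ S and n + m ∈ S for all nonzero m ∈ S, if and only if n + s ∉ s + S and n + s + n_i ∈ s + S for every generator n_i of S. -/
/-!
For a numerical semigroup `S` generated by `n₁, …, n_k`, the condition `n + (S \ {0}) ⊆ S` only
needs to be checked on the generators, since every nonzero element of `S` is a generator plus an
element of `S`. Translating by `s` then turns `n ∉ S` into `n + s ∉ s + S` and `n + nᵢ ∈ S` into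
`n + s + nᵢ ∈ s + S`.
-/

theorem AddSubmonoid.add_mem_closure_of_ne_zero_iff {A : Type*} [AddCommMonoid A] {G : Set A}
    (hG : (0 : A) ∉ G) (n : A) :
    (∀ m ∈ closure G, m ≠ 0 → n + m ∈ closure G) ↔ ∀ g ∈ G, n + g ∈ closure G := by
  refine ⟨fun h g hg ↦ h g (subset_closure hg) (ne_of_mem_of_not_mem hg hG), fun h m hm ↦ ?_⟩
  induction hm using closure_induction with
  | mem g hg => exact fun _ ↦ h g hg
  | zero => exact fun h0 ↦ (h0 rfl).elim
  | add x y hx hy ihx ihy =>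
    intro hxy
    by_cases hx0 : x = 0
    · subst hx0
      rw [zero_add] at hxy ⊢
      exact ihy hxy
    · rw [← add_assoc]
      exact add_mem (ihx hx0) hy

theorem Int.mem_closure_range_natCast_iff {ι : Type*} [Fintype ι] (gens : ι → ℕ) (x : ℤ) :
    x ∈ AddSubmonoid.closure (Set.range fun i ↦ (gens i : ℤ)) ↔
      ∃ u : ι → ℕ, x = ∑ i, (u i : ℤ) * gens i := by
  simp only [AddSubmonoid.mem_closure_range_iff_of_fintype, nsmul_eq_mul]

theorem Set.mem_setOf_exists_eq_add_iff_sub_mem {G : Type*} [AddCommGroup G] (S : Set G)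
    (s y : G) :
    y ∈ {y : G | ∃ x ∈ S, y = s + x} ↔ y - s ∈ S := by
  constructor
  · rintro ⟨x, hx, rfl⟩
    rwa [add_sub_cancel_left]
  · exact fun h ↦ ⟨y - s, h, (add_sub_cancel s y).symm⟩

theorem stmt0_general (k : ℕ) (gens : Fin k → ℕ)
    (hpos : ∀ i, 0 < gens i)
    (S : Set ℤ) (hS : S = {x : ℤ | ∃ u : Fin k → ℕ, x = ∑ i, (u i : ℤ) * gens i})
    (s : ℤ) (n : ℤ) :
    (n ∉ S ∧ ∀ m ∈ S, m ≠ 0 → n + m ∈ S) ↔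
      (n + s ∉ {y : ℤ | ∃ x ∈ S, y = s + x} ∧
        ∀ i, n + s + gens i ∈ {y : ℤ | ∃ x ∈ S, y = s + x}) := by
  have hS' : S = AddSubmonoid.closure (Set.range fun i ↦ (gens i : ℤ)) := by
    ext x
    rw [hS, SetLike.mem_coe, Int.mem_closure_range_natCast_iff]
    rfl
  have hzero : (0 : ℤ) ∉ Set.range fun i ↦ (gens i : ℤ) := by
    rintro ⟨i, hi⟩
    exact (hpos i).ne' (Int.ofNat_eq_zero.mp hi)
  simp only [Set.mem_setOf_exists_eq_add_iff_sub_mem, add_right_comm n s, add_sub_cancel_right]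
  subst hS'
  simp only [SetLike.mem_coe, AddSubmonoid.add_mem_closure_of_ne_zero_iff hzero,
    Set.forall_mem_range]

/-- n ∈ PF(S) iff, for a fixed nonzero s ∈ S, n + s ∉ s + S and
n + s + nᵢ ∈ s + S for every generator nᵢ. -/
theorem stmt0 (k : ℕ) (hk : 0 < k) (gens : Fin k → ℕ)
    (hpos : ∀ i, 0 < gens i) (hgcd : Finset.univ.gcd gens = 1)
    (S : Set ℤ) (hS : S = {x : ℤ | ∃ u : Fin k → ℕ, x = ∑ i, (u i : ℤ) * gens i})
    (s : ℤ) (hs : s ∈ S) (hs0 : s ≠ 0) (n : ℤ) :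
    (n ∉ S ∧ ∀ m ∈ S, m ≠ 0 → n + m ∈ S) ↔
      (n + s ∉ {y : ℤ | ∃ x ∈ S, y = s + x} ∧
        ∀ i, n + s + gens i ∈ {y : ℤ | ∃ x ∈ S, y = s + x}) :=
  stmt0_general k gens hpos S hS s n
end

section
/- The Hilbert series of the numerical semigroup S = ⟨9, 11, 13, 14⟩ satisfies: Σ_{s∈S} z^s · (1−z^13)(1−z^9)(1−z^11)(1−z^14) = 1 − z^39 − z^27 − z^22 − z^42 − z^37 + z^48 + z^49 + z^50 + z^51 + z^53 + z^55 − z^62 − z^77, as an identity of formal power series over ℚ. -/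
/-!
Let `apery r` be the least element of `S = ⟨9, 11, 13, 14⟩` congruent to `r` modulo `9` (the Apéry
set of `S` with respect to `9`). Then `n ∈ S` iff `apery (n % 9) ≤ n`, so the coefficient of `z^n` in
`H(z) (1 - z^9)` is `1` exactly when `n = apery (n % 9)`, and `0` otherwise:
`H(z) (1 - z^9) = Σ_r z^(apery r)`. Multiplying this polynomial by the remaining three factors gives
the identity.
-/

section

open PowerSeries Finset

theorem PowerSeries.mk_indicator_mul_one_sub_X_pow {R : Type*} [CommRing R] {m : ℕ}
    (S : Set ℕ) [DecidablePred (· ∈ S)] (a : ℕ → ℕ) (ha : ∀ r < m, a r % m = r)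
    (hS : ∀ n, n ∈ S ↔ a (n % m) ≤ n) :
    mk (fun n => if n ∈ S then (1 : R) else 0) * (1 - X ^ m) = ∑ r ∈ range m, X ^ a r := by
  rcases Nat.eq_zero_or_pos m with rfl | hm
  · simp
  ext n
  set w := a (n % m)
  have hw : w % m = n % m := ha _ (Nat.mod_lt n hm)
  have hgap (h : w < n) : w + m ≤ n := by
    have := Nat.le_of_dvd (by omega) ((Nat.modEq_iff_dvd' h.le).mp hw)
    omega
  have hsum : ∑ r ∈ range m, coeff n (X ^ a r : R⟦X⟧) = if n = w then 1 else 0 := by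
    simp only [coeff_X_pow]
    refine sum_eq_single (n % m) (fun r hr hne => if_neg ?_)
      (fun h => absurd (mem_range.mpr (Nat.mod_lt n hm)) h)
    rintro rfl
    exact hne (ha r (mem_range.mp hr)).symm
  have hsub (h : m ≤ n) : n - m ∈ S ↔ w ≤ n - m := by
    rw [hS, ← Nat.mod_eq_sub_mod h]
  have hn : n ∈ S ↔ w ≤ n := hS n
  rw [mul_sub, mul_one, map_sub, coeff_mul_X_pow', coeff_mk, map_sum, hsum]
  by_cases hmn : m ≤ n
  · simp only [if_pos hmn, coeff_mk, hsub hmn, hn]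
    split_ifs <;> first | omega | simp
  · simp only [if_neg hmn, hn]
    split_ifs <;> first | omega | simp

end

def apery : ℕ → ℕ
  | 1 => 28
  | 2 => 11
  | 3 => 39
  | 4 => 13
  | 5 => 14
  | 6 => 24
  | 7 => 25
  | 8 => 26
  | _ => 0

theorem apery_mod_nine : ∀ r < 9, apery r % 9 = r := by decide

theorem apery_add_le : ∀ r < 9, ∀ s < 9, apery ((r + s) % 9) ≤ apery r + apery s := by decide

theorem exists_eq_apery : ∀ r < 9, ∃ b c d : ℕ, apery r = 11 * b + 13 * c + 14 * d := by
  intro r hr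
  interval_cases r
  exacts [⟨0, 0, 0, rfl⟩, ⟨0, 0, 2, rfl⟩, ⟨1, 0, 0, rfl⟩, ⟨1, 0, 2, rfl⟩, ⟨0, 1, 0, rfl⟩,
    ⟨0, 0, 1, rfl⟩, ⟨1, 1, 0, rfl⟩, ⟨1, 0, 1, rfl⟩, ⟨0, 2, 0, rfl⟩]

def aperySubmonoid : AddSubmonoid ℕ where
  carrier := {n | apery (n % 9) ≤ n}
  zero_mem' := Nat.zero_le _
  add_mem' {x y} hx hy := by
    have := apery_add_le (x % 9) (Nat.mod_lt _ (by norm_num)) (y % 9) (Nat.mod_lt _ (by norm_num))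
    simp only [Set.mem_ofPred_eq, Nat.add_mod x y] at *
    omega

theorem mem_aperySubmonoid {n : ℕ} : n ∈ aperySubmonoid ↔ apery (n % 9) ≤ n := Iff.rfl

theorem mem_iff_apery_le (n : ℕ) :
    (∃ a b c d : ℕ, n = 9 * a + 11 * b + 13 * c + 14 * d) ↔ apery (n % 9) ≤ n := by
  constructor
  · rintro ⟨a, b, c, d, rfl⟩
    have hgen (g : ℕ) (hg : apery (g % 9) ≤ g) (k : ℕ) : k • g ∈ aperySubmonoid := nsmul_mem hg k
    have h : a • 9 + b • 11 + c • 13 + d • 14 ∈ aperySubmonoid :=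
      add_mem (add_mem (add_mem (hgen 9 (by decide) a) (hgen 11 (by decide) b))
        (hgen 13 (by decide) c)) (hgen 14 (by decide) d)
    rw [← mem_aperySubmonoid]
    simpa only [smul_eq_mul, mul_comm _ 9, mul_comm _ 11, mul_comm _ 13, mul_comm _ 14] using h
  · intro h
    obtain ⟨b, c, d, hbcd⟩ := exists_eq_apery (n % 9) (Nat.mod_lt _ (by norm_num))
    have := apery_mod_nine (n % 9) (Nat.mod_lt _ (by norm_num))
    exact ⟨(n - apery (n % 9)) / 9, b, c, d, by omega⟩

open PowerSeries in
open scoped Classical in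
/-- Hilbert series identity for S = ⟨9,11,13,14⟩. -/
theorem stmt5
    (S : Set ℕ)
    (hS : S = {x : ℕ | ∃ a b c d : ℕ, x = 9 * a + 11 * b + 13 * c + 14 * d})
    (H : PowerSeries ℚ) (hH : H = PowerSeries.mk fun n => if n ∈ S then (1 : ℚ) else 0) :
    H * ((1 - X ^ 13) * (1 - X ^ 9) * (1 - X ^ 11) * (1 - X ^ 14)) =
      1 - X ^ 39 - X ^ 27 - X ^ 22 - X ^ 42 - X ^ 37 + X ^ 48 + X ^ 49 + X ^ 50
        + X ^ 51 + X ^ 53 + X ^ 55 - X ^ 62 - X ^ 77 := by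
  have hApery : H * (1 - X ^ 9) = ∑ r ∈ Finset.range 9, X ^ apery r := by
    subst hH
    refine mk_indicator_mul_one_sub_X_pow S apery apery_mod_nine fun n => ?_
    rw [hS, Set.mem_ofPred_eq, mem_iff_apery_le]
  calc H * ((1 - X ^ 13) * (1 - X ^ 9) * (1 - X ^ 11) * (1 - X ^ 14))
      = H * (1 - X ^ 9) * ((1 - X ^ 13) * (1 - X ^ 11) * (1 - X ^ 14)) := by ring
    _ = _ := by
      rw [hApery]
      simp only [Finset.sum_range_succ, Finset.sum_range_zero, apery]
      ring
end

section
/- The Hilbert series of S = ⟨7, 9, 10⟩ satisfies (Σ_{s∈S} z^s) · (1−z^7)(1−z^9)(1−z^10) = 1 − z^28 − z^27 − z^30 + z^48 + z^37, as an identity of formal power series. -/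
/-!
The gaps of `S = ⟨7, 9, 10⟩` are `G = {1, …, 6, 8, 11, 12, 13, 15, 22}`: below 30 this is a finite
check, and from 23 on `S` contains seven consecutive integers and is closed under `+ 7`.
Hence `H = 1/(1 - z) - ∑_{g ∈ G} z^g`, and since `1 - z` divides `1 - z^7`, multiplying by
`(1 - z^7)(1 - z^9)(1 - z^10)` leaves a polynomial identity.
-/

open PowerSeries

theorem Nat.mem_of_le_of_add_mem {S : Set ℕ} {m c : ℕ} (hm : 0 < m)
    (hadd : ∀ n ∈ S, n + m ∈ S) (hwindow : ∀ n ∈ Finset.Ico c (c + m), n ∈ S) :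
    ∀ n, c ≤ n → n ∈ S := by
  intro n hn
  induction n using Nat.strong_induction_on with
  | _ n ih =>
    by_cases h : n < c + m
    · exact hwindow n (Finset.mem_Ico.2 ⟨hn, h⟩)
    · simpa [Nat.sub_add_cancel (by omega : m ≤ n)] using
        hadd _ (ih (n - m) (by omega) (by omega))

theorem PowerSeries.mk_indicator_eq_mk_one_sub_sum {R : Type*} [Ring R] {S : Set ℕ}
    [DecidablePred (· ∈ S)] {s : Finset ℕ} (hS : ∀ n, n ∈ S ↔ n ∉ s) :
    mk (fun n => if n ∈ S then (1 : R) else 0) = mk 1 - ∑ k ∈ s, X ^ k := by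
  ext n
  by_cases h : n ∈ s <;> simp [coeff_X_pow, hS, h]

def sevenNineTen : Set ℕ := {x | ∃ a b c : ℕ, x = 7 * a + 9 * b + 10 * c}

def sevenNineTenGaps : Finset ℕ := {1, 2, 3, 4, 5, 6, 8, 11, 12, 13, 15, 22}

theorem mem_sevenNineTen_iff_bounded {n : ℕ} (hn : n < 30) :
    n ∈ sevenNineTen ↔ ∃ a < 5, ∃ b < 4, ∃ c < 3, n = 7 * a + 9 * b + 10 * c := by
  constructor
  · rintro ⟨a, b, c, rfl⟩
    exact ⟨a, by omega, b, by omega, c, by omega, rfl⟩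
  · rintro ⟨a, -, b, -, c, -, h⟩
    exact ⟨a, b, c, h⟩

theorem mem_sevenNineTen_iff_not_mem_gaps_of_lt {n : ℕ} (hn : n < 30) :
    n ∈ sevenNineTen ↔ n ∉ sevenNineTenGaps := by
  rw [mem_sevenNineTen_iff_bounded hn]
  revert n
  unfold sevenNineTenGaps
  decide

theorem mem_sevenNineTen_of_le {n : ℕ} (hn : 23 ≤ n) : n ∈ sevenNineTen := by
  refine Nat.mem_of_le_of_add_mem (by norm_num : 0 < 7) ?_ ?_ n hn
  · rintro n ⟨a, b, c, rfl⟩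
    exact ⟨a + 1, b, c, by ring⟩
  · intro k hk
    rw [Finset.mem_Ico] at hk
    rw [mem_sevenNineTen_iff_not_mem_gaps_of_lt (by omega)]
    simp only [sevenNineTenGaps, Finset.mem_insert, Finset.mem_singleton, not_or]
    omega

theorem mem_sevenNineTen_iff (n : ℕ) : n ∈ sevenNineTen ↔ n ∉ sevenNineTenGaps := by
  rcases Nat.lt_or_ge n 30 with hn | hn
  · exact mem_sevenNineTen_iff_not_mem_gaps_of_lt hn
  · refine iff_of_true (mem_sevenNineTen_of_le (by omega)) ?_
    simp only [sevenNineTenGaps, Finset.mem_insert, Finset.mem_singleton, not_or]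
    omega

open PowerSeries in
open scoped Classical in
/-- Hilbert series identity for S = ⟨7,9,10⟩. -/
theorem stmt6
    (S : Set ℕ)
    (hS : S = {x : ℕ | ∃ a b c : ℕ, x = 7 * a + 9 * b + 10 * c})
    (H : PowerSeries ℚ) (hH : H = PowerSeries.mk fun n => if n ∈ S then (1 : ℚ) else 0) :
    H * ((1 - X ^ 7) * (1 - X ^ 9) * (1 - X ^ 10)) =
      1 - X ^ 28 - X ^ 27 - X ^ 30 + X ^ 48 + X ^ 37 := by
  obtain rfl : S = sevenNineTen := hS
  subst hH
  rw [mk_indicator_eq_mk_one_sub_sum mem_sevenNineTen_iff]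
  simp only [sevenNineTenGaps, Finset.mem_insert, Finset.mem_singleton, Finset.sum_insert,
    Finset.sum_singleton, OfNat.one_ne_ofNat, Nat.reduceEqDiff, or_self, not_false_eq_true,
    pow_one]
  linear_combination
    ((1 + X + X ^ 2 + X ^ 3 + X ^ 4 + X ^ 5 + X ^ 6) * (1 - X ^ 9) * (1 - X ^ 10) : ℚ⟦X⟧) *
      mk_one_mul_one_sub_eq_one ℚ
end

section
/- Let S = ⟨n_1, n_2, n_3, n_4⟩ be a numerical semigroup and suppose α_1 is the least positive integer with α_1 n_1 ∈ ⟨n_2, n_3, n_4⟩, and p_1, p_2 are positive integers with p_1 < α_1 and α_2 the least positive integer with α_2 n_2 ∈ ⟨n_1, n_3, n_4⟩ satisfying p_2 < α_2. Then (p_1 n_1 + p_2 n_2) − α_1 n_1 ∉ S. -/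
/-! If `p₁n₁ + p₂n₂ - α₁n₁ = u₁n₁ + u₂n₂ + u₃n₃ + u₄n₄`, then moving terms gives
`(p₂ - u₂)n₂ = (α₁ - p₁ + u₁)n₁ + u₃n₃ + u₄n₄`. The right side is positive because `p₁ < α₁`,
so `0 < p₂ - u₂ ≤ p₂ < α₂`, and this contradicts the minimality of `α₂`. -/

lemma exists_pos_le_mul_eq_of_sub_eq {n1 n2 n3 n4 p1 p2 α1 u1 u2 u3 u4 : ℕ}
    (h1 : 0 < n1) (hp1 : p1 < α1)
    (heq : (p1 : ℤ) * n1 + p2 * n2 - α1 * n1 = u1 * n1 + u2 * n2 + u3 * n3 + u4 * n4) :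
    ∃ v, 0 < v ∧ v ≤ p2 ∧ ∃ a c d : ℕ, v * n2 = a * n1 + c * n3 + d * n4 := by
  obtain ⟨k, rfl⟩ : ∃ k, α1 = p1 + k + 1 := ⟨α1 - p1 - 1, by omega⟩
  have hnat : p2 * n2 = (k + 1 + u1) * n1 + u2 * n2 + u3 * n3 + u4 * n4 := by
    have : ((p2 * n2 : ℕ) : ℤ) = ((k + 1 + u1) * n1 + u2 * n2 + u3 * n3 + u4 * n4 : ℕ) := by
      push_cast at heq ⊢; linarith
    exact_mod_cast this
  have hu2 : u2 < p2 := by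
    by_contra! hle
    nlinarith [Nat.mul_le_mul_right n2 hle]
  obtain ⟨v, rfl⟩ : ∃ v, p2 = u2 + v := ⟨p2 - u2, by omega⟩
  refine ⟨v, by omega, by omega, k + 1 + u1, u3, u4, ?_⟩
  linarith [hnat]

theorem stmt11_general (n1 n2 n3 n4 : ℕ)
    (h1 : 0 < n1)
    (S : Set ℤ)
    (hS : S = {x : ℤ | ∃ a b c d : ℕ, x = (a : ℤ) * n1 + b * n2 + c * n3 + d * n4})
    (α1 α2 p1 p2 : ℕ)
    (hα2min : ∀ u : ℕ, 0 < u → (∃ a c d : ℕ, u * n2 = a * n1 + c * n3 + d * n4) → α2 ≤ u)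
    (hp1' : p1 < α1) (hp2' : p2 < α2) :
    ((p1 : ℤ) * n1 + p2 * n2) - (α1 : ℤ) * n1 ∉ S := by
  subst hS
  rintro ⟨u1, u2, u3, u4, heq⟩
  obtain ⟨v, hv, hvp2, hmem⟩ := exists_pos_le_mul_eq_of_sub_eq h1 hp1' heq
  have := hα2min v hv hmem
  omega

/-- if α1 is least positive with α1·n1 ∈ ⟨n2,n3,n4⟩, α2 is least
positive with α2·n2 ∈ ⟨n1,n3,n4⟩, and 0 < p1 < α1, 0 < p2 < α2, then
(p1·n1 + p2·n2) − α1·n1 ∉ S = ⟨n1,n2,n3,n4⟩. -/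
theorem stmt11 (n1 n2 n3 n4 : ℕ)
    (h1 : 0 < n1) (h2 : 0 < n2) (h3 : 0 < n3) (h4 : 0 < n4)
    (hgcd : Nat.gcd (Nat.gcd n1 n2) (Nat.gcd n3 n4) = 1)
    (S : Set ℤ)
    (hS : S = {x : ℤ | ∃ a b c d : ℕ, x = (a : ℤ) * n1 + b * n2 + c * n3 + d * n4})
    (α1 α2 p1 p2 : ℕ)
    (hα1mem : ∃ b c d : ℕ, α1 * n1 = b * n2 + c * n3 + d * n4)
    (hα1pos : 0 < α1)
    (hα1min : ∀ u : ℕ, 0 < u → (∃ b c d : ℕ, u * n1 = b * n2 + c * n3 + d * n4) → α1 ≤ u)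
    (hα2mem : ∃ a c d : ℕ, α2 * n2 = a * n1 + c * n3 + d * n4)
    (hα2pos : 0 < α2)
    (hα2min : ∀ u : ℕ, 0 < u → (∃ a c d : ℕ, u * n2 = a * n1 + c * n3 + d * n4) → α2 ≤ u)
    (hp1 : 0 < p1) (hp1' : p1 < α1) (hp2 : 0 < p2) (hp2' : p2 < α2) :
    ((p1 : ℤ) * n1 + p2 * n2) - (α1 : ℤ) * n1 ∉ S :=
  stmt11_general n1 n2 n3 n4 h1 S hS α1 α2 p1 p2 hα2min hp1' hp2'
end

section
/- With the hypotheses of Bresinsky's parametrization of 4-generated symmetric semigroups (α_1 = α_21+α_31, α_2 = α_32+α_42, α_3 = α_13+α_43, α_4 = α_14+α_24, and n_1 = α_2α_3α_14 + α_32α_13α_24, n_2 = α_3α_4α_21 + α_31α_43α_24, n_3 = α_1α_4α_32 + α_14α_42α_31, n_4 = α_1α_2α_43 + α_42α_21α_13), one has α_1 n_1 + α_24 n_4 = α_2 n_2 + α_31 n_1 = α_3 n_3 + α_42 n_2 = α_4 n_4 + α_13 n_3. -/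
theorem stmt14_general (α1 α2 α3 α4 α21 α31 α32 α42 α13 α43 α14 α24 : ℕ)
    (n1 n2 n3 n4 : ℕ)
    (ha1 : α1 = α21 + α31) (ha2 : α2 = α32 + α42)
    (ha3 : α3 = α13 + α43) (ha4 : α4 = α14 + α24)
    (hn1 : n1 = α2 * α3 * α14 + α32 * α13 * α24)
    (hn2 : n2 = α3 * α4 * α21 + α31 * α43 * α24)
    (hn3 : n3 = α1 * α4 * α32 + α14 * α42 * α31)
    (hn4 : n4 = α1 * α2 * α43 + α42 * α21 * α13) :
    α1 * n1 + α24 * n4 = α2 * n2 + α31 * n1 ∧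
      α2 * n2 + α31 * n1 = α3 * n3 + α42 * n2 ∧
      α3 * n3 + α42 * n2 = α4 * n4 + α13 * n3 := by
  subst ha1 ha2 ha3 ha4 hn1 hn2 hn3 hn4
  exact ⟨by ring, by ring, by ring⟩

/-- Bresinsky degree identity a₅:
α1·n1 + α24·n4 = α2·n2 + α31·n1 = α3·n3 + α42·n2 = α4·n4 + α13·n3. -/
theorem stmt14 (α1 α2 α3 α4 α21 α31 α32 α42 α13 α43 α14 α24 : ℕ)
    (n1 n2 n3 n4 : ℕ)
    (h21 : 0 < α21) (h31 : 0 < α31) (h32 : 0 < α32) (h42 : 0 < α42)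
    (h13 : 0 < α13) (h43 : 0 < α43) (h14 : 0 < α14) (h24 : 0 < α24)
    (ha1 : α1 = α21 + α31) (ha2 : α2 = α32 + α42)
    (ha3 : α3 = α13 + α43) (ha4 : α4 = α14 + α24)
    (hn1 : n1 = α2 * α3 * α14 + α32 * α13 * α24)
    (hn2 : n2 = α3 * α4 * α21 + α31 * α43 * α24)
    (hn3 : n3 = α1 * α4 * α32 + α14 * α42 * α31)
    (hn4 : n4 = α1 * α2 * α43 + α42 * α21 * α13) :
    α1 * n1 + α24 * n4 = α2 * n2 + α31 * n1 ∧
      α2 * n2 + α31 * n1 = α3 * n3 + α42 * n2 ∧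
      α3 * n3 + α42 * n2 = α4 * n4 + α13 * n3 :=
  stmt14_general α1 α2 α3 α4 α21 α31 α32 α42 α13 α43 α14 α24 n1 n2 n3 n4 ha1 ha2 ha3 ha4 hn1 hn2 hn3
    hn4
end
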